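/- Let A ∈ ℝ^{N×N} with ρ(A) < 1, C ∈ ℝ^{N×d}, φ : M → M a bijection, ω : M → ℝ^d bounded, m ∈ M, X₀ ∈ ℝ^N. Define Xₜ = AXₜ₋₁ + C ω(φᵗ(m)) and f(x) = ∑_{k=0}^∞ Aᵏ C ω(φ^{-k}(x)). Then ‖Xₜ − f(φᵗ(m))‖ → 0 as t → ∞. -/

import Mathlib

open Matrix Filter Topology MeasureTheory ProbabilityTheory

attribute [local instance] Matrix.linftyOpNormedRing Matrix.linftyOpNormedAddCommGroup

/-- The spectral radius of a real square matrix: the maximum modulus of its complex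
eigenvalues. -/
noncomputable def specRad {N : ℕ} (A : Matrix (Fin N) (Fin N) ℝ) : ℝ :=
  sSup ((fun z : ℂ => ‖z‖) '' spectrum ℂ (A.map Complex.ofReal))

/-! The tracking error `e t = X t - f (φ^[t] m)` satisfies `e (t + 1) = A *ᵥ e t`, because the
series defining `f` obeys `f (φ y) = A *ᵥ f y + C *ᵥ ω (φ y)`; hence `e t = A ^ t *ᵥ e 0`.
By Gelfand's formula, `ρ(A) < 1` makes `‖A ^ t‖` decay geometrically, which gives both the
convergence of the series and `e t → 0`. -/

open scoped NNReal ENNReal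

section SpectralRadius

variable {𝔸 : Type*} [NormedRing 𝔸] [NormedAlgebra ℂ 𝔸] [CompleteSpace 𝔸]

theorem eventually_norm_pow_le_of_spectralRadius_lt (a : 𝔸) {r : ℝ≥0}
    (h : spectralRadius ℂ a < r) : ∀ᶠ n : ℕ in atTop, ‖a ^ n‖ ≤ (r : ℝ) ^ n := by
  filter_upwards
    [(spectrum.pow_nnnorm_pow_one_div_tendsto_nhds_spectralRadius a).eventually_lt_const h,
      eventually_ne_atTop 0] with n hn hn0
  rw [← ENNReal.coe_rpow_of_nonneg _ (by positivity), ENNReal.coe_lt_coe] at hn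
  have := NNReal.rpow_lt_rpow hn (Nat.cast_pos.2 (Nat.pos_of_ne_zero hn0))
  rw [← NNReal.rpow_mul, one_div_mul_cancel (Nat.cast_ne_zero.2 hn0), NNReal.rpow_one,
    NNReal.rpow_natCast] at this
  exact_mod_cast this.le

theorem summable_norm_pow_of_spectralRadius_lt_one (a : 𝔸) (h : spectralRadius ℂ a < 1) :
    Summable fun n : ℕ => ‖a ^ n‖ := by
  obtain ⟨r, har, hr1⟩ := ENNReal.lt_iff_exists_nnreal_btwn.mp h
  refine Summable.of_norm_bounded_eventually_nat
    (summable_geometric_of_lt_one r.coe_nonneg (by exact_mod_cast hr1)) ?_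
  filter_upwards [eventually_norm_pow_le_of_spectralRadius_lt a har] with n hn
  rwa [norm_norm]

end SpectralRadius

attribute [local instance] Matrix.linftyOpNormedAlgebra

theorem Matrix.linfty_opNorm_map_eq {m n α β : Type*} [Fintype m] [Fintype n]
    [NormedAddCommGroup α] [NormedAddCommGroup β] (A : Matrix m n α) (f : α → β)
    (hf : ∀ a, ‖f a‖ = ‖a‖) : ‖A.map f‖ = ‖A‖ := by
  have hf' : ∀ a, ‖f a‖₊ = ‖a‖₊ := fun a => NNReal.eq (hf a)
  simp only [Matrix.linfty_opNorm_def, Matrix.map_apply, hf']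

theorem spectralRadius_map_ofReal_le_specRad {N : ℕ} (A : Matrix (Fin N) (Fin N) ℝ) :
    spectralRadius ℂ (A.map Complex.ofReal) ≤ ENNReal.ofReal (specRad A) := by
  have hbdd : BddAbove ((fun z : ℂ => ‖z‖) '' spectrum ℂ (A.map Complex.ofReal)) :=
    ((spectrum.isCompact _).image continuous_norm).bddAbove
  refine iSup₂_le fun z hz => ?_
  rw [← ENNReal.ofReal_coe_nnreal, coe_nnnorm]
  exact ENNReal.ofReal_le_ofReal (le_csSup hbdd ⟨z, hz, rfl⟩)

theorem summable_norm_pow_of_specRad_lt_one {N : ℕ} (A : Matrix (Fin N) (Fin N) ℝ)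
    (hA : specRad A < 1) : Summable fun n : ℕ => ‖A ^ n‖ := by
  have h := summable_norm_pow_of_spectralRadius_lt_one (A.map Complex.ofReal)
    ((spectralRadius_map_ofReal_le_specRad A).trans_lt (ENNReal.ofReal_lt_one.2 hA))
  refine h.congr fun n => ?_
  have hpow : A.map Complex.ofReal ^ n = (A ^ n).map Complex.ofReal :=
    (map_pow (Complex.ofRealHom.mapMatrix : Matrix (Fin N) (Fin N) ℝ →+* _) A n).symm
  rw [hpow, Matrix.linfty_opNorm_map_eq _ _ Complex.norm_real]

section LinearRecursion

variable {n p : Type*} [Fintype n] [DecidableEq n] [Fintype p]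

theorem Matrix.sub_eq_pow_mulVec_sub_of_recursion (A : Matrix n n ℝ) (b X Y : ℕ → n → ℝ)
    (hX : ∀ t, X (t + 1) = A *ᵥ X t + b t) (hY : ∀ t, Y (t + 1) = A *ᵥ Y t + b t) (t : ℕ) :
    X t - Y t = (A ^ t) *ᵥ (X 0 - Y 0) := by
  induction t with
  | zero => simp
  | succ t ih =>
    rw [hX, hY, add_sub_add_right_eq_sub, ← Matrix.mulVec_sub, ih, Matrix.mulVec_mulVec,
      pow_succ']

theorem Matrix.tendsto_norm_sub_of_recursion (A : Matrix n n ℝ)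
    (hA : Tendsto (fun t : ℕ => ‖A ^ t‖) atTop (𝓝 0)) (b X Y : ℕ → n → ℝ)
    (hX : ∀ t, X (t + 1) = A *ᵥ X t + b t) (hY : ∀ t, Y (t + 1) = A *ᵥ Y t + b t) :
    Tendsto (fun t : ℕ => ‖X t - Y t‖) atTop (𝓝 0) := by
  refine squeeze_zero (fun t => norm_nonneg _) (fun t => ?_)
    (by simpa using hA.mul_const ‖X 0 - Y 0‖)
  rw [A.sub_eq_pow_mulVec_sub_of_recursion b X Y hX hY t]
  exact Matrix.linfty_opNorm_mulVec _ _

theorem Matrix.summable_pow_mul_mulVec (A : Matrix n n ℝ) (hA : Summable fun k : ℕ => ‖A ^ k‖)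
    (C : Matrix n p ℝ) {u : ℕ → p → ℝ} {K : ℝ} (hu : ∀ k, ‖u k‖ ≤ K) :
    Summable fun k : ℕ => (A ^ k * C) *ᵥ u k := by
  refine Summable.of_norm_bounded (hA.mul_right (‖C‖ * K)) fun k => ?_
  calc ‖(A ^ k * C) *ᵥ u k‖ ≤ ‖A ^ k * C‖ * ‖u k‖ := Matrix.linfty_opNorm_mulVec _ _
    _ ≤ ‖A ^ k‖ * ‖C‖ * K :=
      mul_le_mul (Matrix.linfty_opNorm_mul _ _) (hu k) (norm_nonneg _) (by positivity)
    _ = ‖A ^ k‖ * (‖C‖ * K) := mul_assoc _ _ _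

theorem Matrix.tsum_pow_mul_mulVec_eq (A : Matrix n n ℝ) (hA : Summable fun k : ℕ => ‖A ^ k‖)
    (C : Matrix n p ℝ) {u : ℕ → p → ℝ} {K : ℝ} (hu : ∀ k, ‖u k‖ ≤ K) :
    ∑' k : ℕ, (A ^ k * C) *ᵥ u k = C *ᵥ u 0 + A *ᵥ ∑' k : ℕ, (A ^ k * C) *ᵥ u (k + 1) := by
  have hA_tsum := (LinearMap.toContinuousLinearMap A.mulVecLin).map_tsum
    (A.summable_pow_mul_mulVec hA C fun k => hu (k + 1))
  simp only [LinearMap.coe_toContinuousLinearMap', Matrix.mulVecLin_apply] at hA_tsum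
  rw [(A.summable_pow_mul_mulVec hA C hu).tsum_eq_zero_add, hA_tsum]
  simp [pow_succ', Matrix.mul_assoc, Matrix.mulVec_mulVec]

end LinearRecursion

theorem stmt_11 {N d : ℕ} {M : Type*} (A : Matrix (Fin N) (Fin N) ℝ)
    (hA : specRad A < 1) (C : Matrix (Fin N) (Fin d) ℝ)
    (φ : M ≃ M) (ω : M → Fin d → ℝ) (hω : ∃ K : ℝ, ∀ x, ‖ω x‖ ≤ K) (m : M)
    (X : ℕ → Fin N → ℝ)
    (hX : ∀ t : ℕ, X (t + 1) = A.mulVec (X t) + C.mulVec (ω ((⇑φ)^[t + 1] m)))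
    (f : M → Fin N → ℝ)
    (hf : ∀ x, f x = ∑' k : ℕ, (A ^ k * C).mulVec (ω ((⇑φ.symm)^[k] x))) :
    Tendsto (fun t : ℕ => ‖X t - f ((⇑φ)^[t] m)‖) atTop (𝓝 0) := by
  obtain ⟨K, hK⟩ := hω
  have hsum := summable_norm_pow_of_specRad_lt_one A hA
  have hf_step : ∀ y, f (φ y) = A *ᵥ f y + C *ᵥ ω (φ y) := fun y => by
    rw [hf, hf, A.tsum_pow_mul_mulVec_eq hsum C fun k => hK _, add_comm]
    simp [Function.iterate_succ_apply]
  refine A.tendsto_norm_sub_of_recursion hsum.tendsto_atTop_zero _ X _ hX fun t => ?_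
  rw [Function.iterate_succ_apply', hf_step]
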